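/- arXiv:2210.01310 — 4 statements merged into one kernel-verified Lean document; each statement's English description precedes it below -/
import Mathlib

section
/- Let G_b be a simple, weakly connected bidirected graph on n nodes with forward and backward edge weight vectors w+ > 0 and w- > 0, and let Γ = A⁺[w⁺] − A⁻[w⁻] be its asymmetrically weighted incidence matrix. If a nonzero vector x ∈ ℝⁿ satisfies Γᵀ x = 0, then either every entry of x is strictly positive or every entry of x is strictly negative. -/
/-- For a simple, weakly connected bidirected graph with strictly positive
forward and backward edge weights, any nonzero vector in the kernel of the transpose of the
asymmetrically weighted incidence matrix Γ = A⁺[w⁺] − A⁻[w⁻] is either entrywise strictly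
positive or entrywise strictly negative. -/
theorem stmt0
    (N E : ℕ)
    (tail head : Fin E → Fin N)                      -- forward edge k goes tail k → head k
    (hsimple : ∀ k, tail k ≠ head k)                 -- no self-loops
    (hconn : ∀ i j : Fin N,                          -- weak connectivity
      Relation.ReflTransGen
        (fun a b => ∃ k, (tail k = a ∧ head k = b) ∨ (tail k = b ∧ head k = a)) i j)
    (wp wm : Fin E → ℝ)
    (hwp : ∀ k, 0 < wp k) (hwm : ∀ k, 0 < wm k)
    (Γ : Matrix (Fin N) (Fin E) ℝ)
    (hΓ : ∀ i k, Γ i k =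
      if i = tail k then wp k else if i = head k then - wm k else 0)
    (x : Fin N → ℝ) (hx : x ≠ 0)
    (hker : Γ.transpose.mulVec x = 0) :
    (∀ i, 0 < x i) ∨ (∀ i, x i < 0) := by
  have key : ∀ k, wp k * x (tail k) = wm k * x (head k) := by
    intro k
    have h0 := congrFun hker k
    have hsum : (Γ.transpose.mulVec x) k
        = ∑ i, (if i = tail k then wp k * x i else 0)
            + ∑ i, (if i = head k then - wm k * x i else 0) := by
      rw [Matrix.mulVec, dotProduct, ← Finset.sum_add_distrib]
      apply Finset.sum_congr rfl
      intro i _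
      rw [Matrix.transpose_apply, hΓ]
      by_cases h1 : i = tail k
      · subst h1
        simp [Ne.symm (hsimple k) , hsimple k]
      · by_cases h2 : i = head k
        · subst h2; simp [h1]
        · simp [h1, h2]
    rw [hsum] at h0
    simp only [Finset.sum_ite_eq', Finset.mem_univ, if_true, Pi.zero_apply] at h0
    linarith
  have hstep : ∀ k, (0 < x (tail k) ↔ 0 < x (head k)) ∧ (x (tail k) < 0 ↔ x (head k) < 0) := by
    intro k
    have hp := hwp k; have hm := hwm k; have hk := key k
    constructor
    · constructor
      · intro h; nlinarith
      · intro h; nlinarith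
    · constructor
      · intro h; nlinarith
      · intro h; nlinarith
  have hrel : ∀ i j : Fin N,
      Relation.ReflTransGen
        (fun a b => ∃ k, (tail k = a ∧ head k = b) ∨ (tail k = b ∧ head k = a)) i j →
      ((0 < x i ↔ 0 < x j) ∧ (x i < 0 ↔ x j < 0)) := by
    intro i j h
    induction h with
    | refl => exact ⟨Iff.rfl, Iff.rfl⟩
    | tail hab hbc ih =>
      obtain ⟨k, hk⟩ := hbc
      rcases hk with ⟨ht, hh⟩ | ⟨ht, hh⟩
      · subst ht; subst hh
        exact ⟨ih.1.trans (hstep k).1, ih.2.trans (hstep k).2⟩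
      · subst ht; subst hh
        exact ⟨ih.1.trans (hstep k).1.symm, ih.2.trans (hstep k).2.symm⟩
  obtain ⟨i0, hi0⟩ := Function.ne_iff.mp hx
  rcases lt_trichotomy (x i0) 0 with hneg | hzero | hpos
  · right
    intro i
    exact ((hrel i0 i (hconn i0 i)).2).mp hneg
  · exact absurd hzero hi0
  · left
    intro i
    exact ((hrel i0 i (hconn i0 i)).1).mp hpos
end

section
/- Under the stated assumptions, the matrix M_B := Rᵀ Γ_B ∈ ℝ^{(n+m−1)×|E|} has full row rank n+m−1. -/
/-- M_B := Rᵀ Γ_B has full row rank n+m−1. Here the transmission network has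
N+1 = n+m buses and E branches; Γ_B is the asymmetrically weighted incidence matrix whose
column k has exactly two nonzero entries (positive at the tail bus, negative at the head bus);
α ≥ 0 with 1ᵀα = 1 are the participation factors, and R is any full-column-rank matrix with
Rᵀα = 0. -/
theorem stmt1
    (N E : ℕ)                                        -- N + 1 = n + m buses
    (tl hd : Fin E → Fin (N + 1))
    (hsimple : ∀ k, tl k ≠ hd k)
    (hconn : ∀ i j : Fin (N + 1),
      Relation.ReflTransGen
        (fun a b => ∃ k, (tl k = a ∧ hd k = b) ∨ (tl k = b ∧ hd k = a)) i j)
    (wp wm : Fin E → ℝ)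
    (hwp : ∀ k, 0 < wp k) (hwm : ∀ k, 0 < wm k)
    (ΓB : Matrix (Fin (N + 1)) (Fin E) ℝ)
    (hΓB : ∀ i k, ΓB i k =
      if i = tl k then wp k else if i = hd k then - wm k else 0)
    (α : Fin (N + 1) → ℝ)
    (hα : ∀ i, 0 ≤ α i) (hαsum : ∑ i, α i = 1)
    (R : Matrix (Fin (N + 1)) (Fin N) ℝ)
    (hR : Function.Injective R.mulVecLin)            -- full column rank
    (hRα : R.transpose.mulVec α = 0) :
    (R.transpose * ΓB).rank = N := by
  -- It suffices to compute the rank of the transpose ΓBᵀ * R.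
  have htr : (R.transpose * ΓB).rank = (ΓB.transpose * R).rank := by
    rw [← Matrix.rank_transpose (R.transpose * ΓB), Matrix.transpose_mul,
      Matrix.transpose_transpose]
  rw [htr]
  -- It suffices to show (ΓBᵀ * R).mulVecLin is injective.
  have hinj : Function.Injective (ΓB.transpose * R).mulVecLin := by
    rw [← LinearMap.ker_eq_bot, LinearMap.ker_eq_bot']
    intro x hx
    set v : Fin (N + 1) → ℝ := R.mulVec x with hv
    have hΓv : ΓB.transpose.mulVec v = 0 := by
      rw [Matrix.mulVecLin_mul] at hx
      exact hx
    -- edge equations : wp k * v (tl k) = wm k * v (hd k)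
    have hedge : ∀ k, wp k * v (tl k) = wm k * v (hd k) := by
      intro k
      have h0 : ΓB.transpose.mulVec v k = 0 := by rw [hΓv]; rfl
      have hsum : ∑ i, ΓB i k * v i = 0 := by
        simpa [Matrix.mulVec, dotProduct, Matrix.transpose_apply,
          mul_comm] using h0
      have hfun : ∀ i, ΓB i k * v i =
          (if i = tl k then wp k * v (tl k) else 0)
          + (if i = hd k then -(wm k * v (hd k)) else 0) := by
        intro i
        rw [hΓB]
        by_cases h1 : i = tl k
        · subst h1
          simp [hsimple k, (hsimple k : tl k ≠ hd k)]
        · by_cases h2 : i = hd k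
          · subst h2; simp [h1]
          · simp [h1, h2]
      rw [Finset.sum_congr rfl (fun i _ => hfun i), Finset.sum_add_distrib,
        Finset.sum_ite_eq' Finset.univ (tl k), Finset.sum_ite_eq' Finset.univ (hd k)] at hsum
      simp at hsum
      linarith
    -- along the connectivity relation, values of v differ by a positive factor
    have hkey : ∀ i j : Fin (N + 1),
        Relation.ReflTransGen
          (fun a b => ∃ k, (tl k = a ∧ hd k = b) ∨ (tl k = b ∧ hd k = a)) i j →
        ∃ c : ℝ, 0 < c ∧ v j = c * v i := by
      intro i j h
      induction h with
      | refl => exact ⟨1, one_pos, (one_mul _).symm⟩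
      | @tail b c' hab hbc ih =>
        obtain ⟨c, hc, hvc⟩ := ih
        obtain ⟨k, hk | hk⟩ := hbc
        · -- tl k = b, hd k = c'
          obtain ⟨h1, h2⟩ := hk
          refine ⟨wp k / wm k * c, mul_pos (div_pos (hwp k) (hwm k)) hc, ?_⟩
          have he := hedge k
          rw [h1, h2] at he
          rw [mul_assoc, ← hvc, div_mul_eq_mul_div, eq_div_iff (hwm k).ne']
          linarith
        · obtain ⟨h1, h2⟩ := hk
          refine ⟨wm k / wp k * c, mul_pos (div_pos (hwm k) (hwp k)) hc, ?_⟩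
          have he := hedge k
          rw [h1, h2] at he
          rw [mul_assoc, ← hvc, div_mul_eq_mul_div, eq_div_iff (hwp k).ne']
          linarith
    -- α ⬝ v = 0
    have hαv : ∑ i, α i * v i = 0 := by
      have h1 : dotProduct α (R.mulVec x)
          = dotProduct (R.transpose.mulVec α) x := by
        rw [Matrix.dotProduct_mulVec, Matrix.mulVec_transpose]
      rw [hRα] at h1
      simpa [dotProduct, hv] using h1
    -- find a bus with positive participation
    obtain ⟨i0, -, hi0⟩ : ∃ i ∈ Finset.univ, α i ≠ 0 :=
      Finset.exists_ne_zero_of_sum_ne_zero (by rw [hαsum]; norm_num)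
    choose c hc hvc using fun j => hkey i0 j (hconn i0 j)
    have hsum' : (∑ j, α j * c j) * v i0 = 0 := by
      rw [Finset.sum_mul]
      rw [← hαv]
      exact Finset.sum_congr rfl fun j _ => by rw [hvc j]; ring
    have hpos : 0 < ∑ j, α j * c j := by
      apply Finset.sum_pos' (fun j _ => mul_nonneg (hα j) (hc j).le)
      exact ⟨i0, Finset.mem_univ i0,
        mul_pos (lt_of_le_of_ne (hα i0) (Ne.symm hi0)) (hc i0)⟩
    have hvi0 : v i0 = 0 := by
      rcases mul_eq_zero.mp hsum' with h | h
      · exact absurd h hpos.ne'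
      · exact h
    have hv0 : v = 0 := by
      funext j
      rw [hvc j, hvi0, mul_zero]; rfl
    have : R.mulVecLin x = R.mulVecLin 0 := by
      simpa [Matrix.mulVecLin_apply, hv] using hv0
    exact hR this
  rw [Matrix.rank, LinearMap.finrank_range_of_inj hinj, Module.finrank_pi,
    Fintype.card_fin]
end

section
/- Under Assumption 1 on B (B_LL strictly diagonally dominant with negative diagonal and nonnegative off-diagonals, and B_{LG} entrywise nonnegative), and V_G > 0, the open-circuit load voltage V_L° := −B_LL^{-1} B_LG V_G satisfies V_L° > 0 entrywise, provided every load bus is connected through the network to some generator bus. -/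
/-- Strict diagonal dominance implies the determinant is a unit. -/
lemma sdd_isUnit_det {n : ℕ} (BLL : Matrix (Fin n) (Fin n) ℝ)
    (hdom : ∀ i, ∑ j ∈ Finset.univ.erase i, |BLL i j| < |BLL i i|) :
    IsUnit BLL.det := by
  rw [isUnit_iff_ne_zero]
  intro hdet
  obtain ⟨v, hv0, hv⟩ := (Matrix.exists_mulVec_eq_zero_iff).2 hdet
  obtain ⟨i0, hi0'⟩ := Function.ne_iff.1 hv0
  have hi0 : v i0 ≠ 0 := hi0'
  have hne : (Finset.univ : Finset (Fin n)).Nonempty := ⟨i0, Finset.mem_univ _⟩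
  obtain ⟨k, -, hk⟩ := Finset.exists_max_image Finset.univ (fun j => |v j|) hne
  have hk' : ∀ j, |v j| ≤ |v k| := fun j => hk j (Finset.mem_univ j)
  have hvk : 0 < |v k| := lt_of_lt_of_le (abs_pos.2 hi0) (hk' i0)
  have hxk := congrFun hv k
  simp only [Matrix.mulVec, dotProduct, Pi.zero_apply] at hxk
  have hsplit : BLL k k * v k + ∑ j ∈ Finset.univ.erase k, BLL k j * v j = 0 := by
    rw [Finset.add_sum_erase Finset.univ (fun j => BLL k j * v j) (Finset.mem_univ k)]
    exact hxk
  have h1 : |BLL k k| * |v k| = |∑ j ∈ Finset.univ.erase k, BLL k j * v j| := by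
    rw [← abs_mul]
    have : BLL k k * v k = -∑ j ∈ Finset.univ.erase k, BLL k j * v j := by linarith
    rw [this, abs_neg]
  have h2 : |∑ j ∈ Finset.univ.erase k, BLL k j * v j|
      ≤ ∑ j ∈ Finset.univ.erase k, |BLL k j| * |v k| := by
    refine (Finset.abs_sum_le_sum_abs _ _).trans (Finset.sum_le_sum fun j _ => ?_)
    rw [abs_mul]
    exact mul_le_mul_of_nonneg_left (hk' j) (abs_nonneg _)
  have h3 : ∑ j ∈ Finset.univ.erase k, |BLL k j| * |v k|
      = (∑ j ∈ Finset.univ.erase k, |BLL k j|) * |v k| := (Finset.sum_mul ..).symm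
  have h4 : (∑ j ∈ Finset.univ.erase k, |BLL k j|) * |v k| < |BLL k k| * |v k| :=
    mul_lt_mul_of_pos_right (hdom k) hvk
  rw [h1] at h4
  exact absurd (h2.trans_eq h3) (not_le.2 h4)

/-- Under Assumption 1 on B (B_LL strictly diagonally dominant with negative
diagonal and nonnegative off-diagonals, B_LG entrywise nonnegative) and V_G > 0, the
open-circuit load voltage V_L° := −B_LL⁻¹ B_LG V_G is entrywise strictly positive, provided
every load bus is connected through the network to some generator bus. Connectivity is
encoded via strictly positive off-diagonal entries of B_LL (load-load branches) and strictly
positive entries of B_LG (load-generator branches). -/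
theorem stmt3
    (n m : ℕ)
    (BLL : Matrix (Fin n) (Fin n) ℝ)
    (BLG : Matrix (Fin n) (Fin m) ℝ)
    (VG : Fin m → ℝ)
    (hdom : ∀ i, ∑ j ∈ Finset.univ.erase i, |BLL i j| < |BLL i i|)
    (hdiag : ∀ i, BLL i i < 0)
    (hoff : ∀ i j, i ≠ j → 0 ≤ BLL i j)
    (hBLG : ∀ i g, 0 ≤ BLG i g)
    (hVG : ∀ g, 0 < VG g)
    -- every load bus reaches, through load-load branches, a load bus adjacent to a generator
    (hreach : ∀ i : Fin n, ∃ j : Fin n,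
      Relation.ReflTransGen (fun a b => a ≠ b ∧ 0 < BLL a b) i j ∧ ∃ g, 0 < BLG j g) :
    ∀ i, 0 < (-(BLL⁻¹ * BLG)).mulVec VG i := by
  have hdet : IsUnit BLL.det := sdd_isUnit_det BLL hdom
  set c : Fin n → ℝ := BLG.mulVec VG with hc_def
  set x : Fin n → ℝ := (-(BLL⁻¹ * BLG)).mulVec VG with hx_def
  have hc : ∀ k, 0 ≤ c k := by
    intro k
    have h : c k = ∑ g, BLG k g * VG g := rfl
    rw [h]
    exact Finset.sum_nonneg fun g _ => mul_nonneg (hBLG k g) (hVG g).le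
  -- BLL * x = -c
  have hAx : ∀ k, ∑ j, BLL k j * x j = -(c k) := by
    intro k
    have : BLL.mulVec x = -(c) := by
      rw [hx_def, Matrix.mulVec_mulVec, Matrix.mul_neg,
        Matrix.mul_nonsing_inv_cancel_left _ _ hdet, Matrix.neg_mulVec]
    have := congrFun this k
    simpa [Matrix.mulVec, dotProduct] using this
  -- Step 1: x ≥ 0
  have hxnn : ∀ i, 0 ≤ x i := by
    rcases Nat.eq_zero_or_pos n with hn | hn
    · intro i; exact absurd i.isLt (by omega)
    have hne : (Finset.univ : Finset (Fin n)).Nonempty := ⟨⟨0, hn⟩, Finset.mem_univ _⟩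
    obtain ⟨k, -, hk⟩ := Finset.exists_min_image Finset.univ x hne
    have hk' : ∀ j, x k ≤ x j := fun j => hk j (Finset.mem_univ j)
    rcases le_or_gt 0 (x k) with h | h
    · exact fun i => h.trans (hk' i)
    exfalso
    -- rowsum < 0
    have hrow : ∑ j, BLL k j < 0 := by
      have h1 : ∑ j ∈ Finset.univ.erase k, BLL k j = ∑ j ∈ Finset.univ.erase k, |BLL k j| :=
        Finset.sum_congr rfl fun j hj =>
          (abs_of_nonneg (hoff k j (Finset.ne_of_mem_erase hj).symm)).symm
      have h2 : |BLL k k| = -BLL k k := abs_of_neg (hdiag k)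
      have := hdom k
      rw [h1.symm, h2] at this
      have h3 : BLL k k + ∑ j ∈ Finset.univ.erase k, BLL k j < 0 := by linarith
      rwa [Finset.add_sum_erase Finset.univ (fun j => BLL k j) (Finset.mem_univ k)] at h3
    have hge : (∑ j, BLL k j) * x k ≤ ∑ j, BLL k j * x j := by
      rw [Finset.sum_mul]
      refine Finset.sum_le_sum fun j _ => ?_
      rcases eq_or_ne j k with rfl | hj
      · exact le_refl _
      · exact mul_le_mul_of_nonneg_left (hk' j) (hoff k j (Ne.symm hj))
    have hpos : 0 < (∑ j, BLL k j) * x k := mul_pos_of_neg_of_neg hrow h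
    have := hAx k
    have : c k < 0 := by nlinarith
    exact absurd this (not_lt.2 (hc k))
  -- Step 2: zero propagation
  have hzero : ∀ a, x a = 0 → (∀ j, BLL a j * x j = 0) ∧ (∀ g, BLG a g = 0) := by
    intro a ha
    have hnn : ∀ j ∈ (Finset.univ : Finset (Fin n)), 0 ≤ BLL a j * x j := by
      intro j _
      rcases eq_or_ne j a with rfl | hj
      · rw [ha, mul_zero]
      · exact mul_nonneg (hoff a j (Ne.symm hj)) (hxnn j)
    have hsum := hAx a
    have hca : c a = 0 := by
      have h0 : 0 ≤ ∑ j, BLL a j * x j := Finset.sum_nonneg hnn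
      have := hc a
      linarith
    have hall : ∀ j ∈ (Finset.univ : Finset (Fin n)), BLL a j * x j = 0 := by
      rw [← Finset.sum_eq_zero_iff_of_nonneg hnn]
      rw [hsum, hca, neg_zero]
    constructor
    · exact fun j => hall j (Finset.mem_univ j)
    · intro g
      have hnn' : ∀ g ∈ (Finset.univ : Finset (Fin m)), 0 ≤ BLG a g * VG g :=
        fun g _ => mul_nonneg (hBLG a g) (hVG g).le
      have : ∀ g ∈ (Finset.univ : Finset (Fin m)), BLG a g * VG g = 0 := by
        rw [← Finset.sum_eq_zero_iff_of_nonneg hnn']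
        simpa [hc_def, Matrix.mulVec, dotProduct] using hca
      have := this g (Finset.mem_univ g)
      rcases mul_eq_zero.1 this with h | h
      · exact h
      · exact absurd h (ne_of_gt (hVG g))
  -- Conclusion
  intro i
  rcases lt_or_eq_of_le (hxnn i) with h | h
  · exact h
  exfalso
  obtain ⟨j, hij, g, hg⟩ := hreach i
  have hxj : x j = 0 := by
    clear hg
    induction hij with
    | refl => exact h.symm
    | @tail b c' hab hbc ih =>
      have h1 := (hzero b ih).1 c'
      rcases mul_eq_zero.1 h1 with h' | h'
      · exact absurd h' (ne_of_gt hbc.2)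
      · exact h'
  exact absurd ((hzero j hxj).2 g) (ne_of_gt hg)
end

section
/- For the lossless two-bus system (μ = 0) with map F₀(ψ, x) = (−γ_P/(x+1), γ_Q/(x+1) + sqrt(1 − ψ'²) − 1) where ψ' = −γ_P/(x+1) is the updated first coordinate, and under 0 < 4γ_P² − 4γ_Q < 1, the point ξ* = (k₁⁻, −k₂⁻) with k₂⁻ = 1 − sqrt(1/2 + γ_Q + sqrt(1/4 + γ_Q − γ_P²)) and k₁⁻ = −γ_P/(1 − k₂⁻) is a fixed point of F₀ (i.e., a power flow solution of the two-bus system). -/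
open Real in
/-- For the lossless two-bus FPPF map
F₀(ψ, x) = (−γ_P/(x+1), γ_Q/(x+1) + √(1 − ψ'²) − 1) with ψ' = −γ_P/(x+1), under
0 < 4γ_P² − 4γ_Q < 1, the point ξ* = (k₁⁻, −k₂⁻), with
k₂⁻ = 1 − √(1/2 + γ_Q + √(1/4 + γ_Q − γ_P²)) and k₁⁻ = −γ_P/(1 − k₂⁻),
is a fixed point of F₀. -/
theorem stmt7
    (γP γQ : ℝ) (hγP : 0 < γP) (hγQ : 0 < γQ)
    (hload : 0 < 4 * γP ^ 2 - 4 * γQ ∧ 4 * γP ^ 2 - 4 * γQ < 1)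
    (F0 : ℝ × ℝ → ℝ × ℝ)
    (hF0 : ∀ ξ : ℝ × ℝ, F0 ξ =
      (- γP / (ξ.2 + 1),
       γQ / (ξ.2 + 1) + sqrt (1 - (- γP / (ξ.2 + 1)) ^ 2) - 1))
    (k2m k1m : ℝ)
    (hk2m : k2m = 1 - sqrt (1 / 2 + γQ + sqrt (1 / 4 + γQ - γP ^ 2)))
    (hk1m : k1m = - γP / (1 - k2m)) :
    F0 (k1m, -k2m) = (k1m, -k2m) := by
  obtain ⟨h1, h2⟩ := hload
  set s : ℝ := sqrt (1 / 4 + γQ - γP ^ 2) with hs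
  have hspos : (0:ℝ) < 1 / 4 + γQ - γP ^ 2 := by nlinarith
  have hs0 : 0 ≤ s := Real.sqrt_nonneg _
  have hs2 : s ^ 2 = 1 / 4 + γQ - γP ^ 2 := Real.sq_sqrt hspos.le
  set v : ℝ := sqrt (1 / 2 + γQ + s) with hv
  have hvpos : (0:ℝ) < 1 / 2 + γQ + s := by nlinarith
  have hv0 : 0 < v := Real.sqrt_pos.mpr hvpos
  have hv2 : v ^ 2 = 1 / 2 + γQ + s := Real.sq_sqrt hvpos.le
  have hxv : -k2m + 1 = v := by rw [hk2m]; ring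
  have hsqrt : sqrt (1 - (- γP / v) ^ 2) = (1 / 2 + s) / v := by
    have h : 1 - (- γP / v) ^ 2 = ((1 / 2 + s) / v) ^ 2 := by
      field_simp
      nlinarith [hv2, hs2]
    rw [h, Real.sqrt_sq (by positivity)]
  rw [hF0]
  simp only [Prod.mk.injEq]
  constructor
  · rw [hxv, hk1m, hk2m]; ring_nf
  · rw [hxv, hsqrt]
    field_simp
    nlinarith [hv2]
end
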